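/- arXiv:2403.03197 — 5 statements merged into one kernel-verified Lean document; each statement's English description precedes it below -/
import Mathlib

section
/- For every integer n ≥ 1, the set 𝒞_n of all instances of the θ_n-chip is equal to the extended set of metallic mean Wang tiles 𝒯'_n. -/
open scoped BigOperators

namespace MetallicMean

/-- A 3-dimensional integer vector. -/
abbrev Vec3 := ℤ × ℤ × ℤ

/-- A Wang tile is a quadruple (right, top, left, bottom) of labels. -/
abbrev Tile := Vec3 × Vec3 × Vec3 × Vec3

def right (τ : Tile) : Vec3 := τ.1
def top (τ : Tile) : Vec3 := τ.2.1
def left (τ : Tile) : Vec3 := τ.2.2.1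
def bottom (τ : Tile) : Vec3 := τ.2.2.2

/-- Reflection of a tile by the positive diagonal: (r,t,ℓ,b) ↦ (t,r,b,ℓ). -/
def reflect (τ : Tile) : Tile := (top τ, right τ, bottom τ, left τ)

/-- The set V_n of admissible labels. -/
def Vset (n : ℤ) : Set Vec3 :=
  {v | 0 ≤ v.1 ∧ v.1 ≤ v.2.1 ∧ v.2.1 ≤ v.2.2 ∧ v.2.2 ≤ n + 1 ∧ v.2.1 ≤ 1}

/-- The function θ_n. -/
def theta (n : ℤ) (u v : Vec3) : Vec3 :=
  (u.1,
   if u.1 = 0 then v.2.2 - n else 1,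
   if v.1 = 0 then v.2.1 + u.1 else u.2.2 + 1)

/-- The set 𝒞_n of instances of the θ_n-chip. -/
def Cset (n : ℤ) : Set Tile :=
  {τ | ∃ u v : Vec3, u ∈ Vset n ∧ v ∈ Vset n ∧
      theta n u v ∈ Vset n ∧ theta n v u ∈ Vset n ∧
      τ = (theta n u v, theta n v u, u, v)}

/-- The n-th metallic mean β, the positive root of x² - nx - 1. -/
noncomputable def beta (n : ℤ) : ℝ := ((n : ℝ) + Real.sqrt ((n : ℝ) ^ 2 + 4)) / 2

/-- The conjugate root β* = n - β = -β⁻¹. -/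
noncomputable def betaStar (n : ℤ) : ℝ := (n : ℝ) - beta n

/-- The coding map Λ_n. -/
noncomputable def Lam (n : ℤ) (x y : ℝ) : Vec3 :=
  (⌊y + betaStar n + 1⌋,
   ⌊(beta n)⁻¹ * x + y + betaStar n + 1⌋,
   ⌊beta n * x + y + betaStar n + 1⌋)

/-- The Wang tile TILE_n(x, y), written as (right, top, left, bottom). -/
noncomputable def TileAt (n : ℤ) (x y : ℝ) : Tile :=
  (Lam n (Int.fract x) (Int.fract y),
   Lam n (Int.fract y) (Int.fract x),
   Lam n (Int.fract (x + betaStar n)) (Int.fract y),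
   Lam n (Int.fract (y + betaStar n)) (Int.fract x))

/-- The metallic mean Wang tile set 𝒯_n = {TILE_n(x,y) : (x,y) ∈ [0,1]²}. -/
def Tset (n : ℤ) : Set Tile :=
  {τ | ∃ x y : ℝ, x ∈ Set.Icc (0 : ℝ) 1 ∧ y ∈ Set.Icc (0 : ℝ) 1 ∧ τ = TileAt n x y}

/-- A configuration assigns a tile to every position of ℤ². -/
abbrev Config := ℤ × ℤ → Tile

/-- A configuration is valid w.r.t. a set `S` of Wang tiles if all its tiles are in `S`
and contiguous edges of adjacent tiles match. -/
def IsValid (S : Set Tile) (w : Config) : Prop :=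
  (∀ p : ℤ × ℤ, w p ∈ S) ∧
  ∀ p : ℤ × ℤ,
    right (w p) = left (w (p + (1, 0))) ∧
    top (w p) = bottom (w (p + (0, 1)))

/-- The Wang shift Ω_S of all valid configurations over `S`. -/
def OmegaOf (S : Set Tile) : Set Config := {w | IsValid S w}

/-- The shift ℤ²-action on configurations: (σ^k w)(p) = w(p + k). -/
def shift (k : ℤ × ℤ) (w : Config) : Config := fun p => w (p + k)

end MetallicMean

namespace MetallicMean

/-- White tiles. -/
def whiteT (n : ℤ) : Set Tile :=
  {τ | ∃ i j : ℤ, 1 ≤ i ∧ i ≤ n ∧ 1 ≤ j ∧ j ≤ n ∧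
    τ = ((1, 1, i + 1), (1, 1, j + 1), (1, 1, i), (1, 1, j))}

/-- Horizontal blue tiles (extended set: 0 ≤ i ≤ n). -/
def blueHExt (n : ℤ) : Set Tile :=
  {τ | ∃ i : ℤ, 0 ≤ i ∧ i ≤ n ∧
    τ = ((0, 0, i + 1), (1, 1, 1), (0, 0, i), (1, 1, n))}

/-- Horizontal yellow tiles. -/
def yellowH (n : ℤ) : Set Tile :=
  {τ | ∃ i : ℤ, 1 ≤ i ∧ i ≤ n ∧
    τ = ((0, 1, i + 1), (1, 1, 2), (0, 1, i), (1, 1, n + 1))}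

/-- Horizontal green tiles. -/
def greenH (n : ℤ) : Set Tile :=
  {τ | ∃ i : ℤ, 0 ≤ i ∧ i ≤ n ∧
    τ = ((0, 1, i + 1), (1, 1, 1), (0, 0, i), (1, 1, n + 1))}

/-- Horizontal antigreen tiles. -/
def antigreenH (n : ℤ) : Set Tile :=
  {τ | ∃ i : ℤ, 1 ≤ i ∧ i ≤ n ∧
    τ = ((0, 0, i + 1), (1, 1, 2), (0, 1, i), (1, 1, n))}

/-- The three vectors indexing junction tiles. -/
def junctionVecs (n : ℤ) : Set Vec3 := {(0, 0, n), (0, 1, n), (0, 1, n + 1)}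

/-- The 9 junction tiles of the extended set. -/
def junctionExt (n : ℤ) : Set Tile :=
  {τ | ∃ u v : Vec3, u ∈ junctionVecs n ∧ v ∈ junctionVecs n ∧
    τ = ((0, v.2.2 - n, v.2.1), (0, u.2.2 - n, u.2.1), u, v)}

/-- The extended set 𝒯'_n of metallic mean Wang tiles. -/
def TprimeSet (n : ℤ) : Set Tile :=
  whiteT n ∪ blueHExt n ∪ yellowH n ∪ greenH n ∪ antigreenH n ∪
    reflect '' blueHExt n ∪ reflect '' yellowH n ∪ reflect '' greenH n ∪
    reflect '' antigreenH n ∪ junctionExt n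

/-! The chip is symmetric under the diagonal reflection, and a label `v ∈ V_n` has
`v₀ ∈ {0, 1}`; the four choices of `(u₀, v₀)` give the white tiles, the horizontal tiles, their
reflections and the junction tiles respectively. On the horizontal chips `u = (0, d, i)`,
`v = (1, 1, n + e)` the bits `d` and `e` select the colour. -/

def chip (n : ℤ) (u v : Vec3) : Tile := (theta n u v, theta n v u, u, v)

def IsChip (n : ℤ) (u v : Vec3) : Prop :=
  u ∈ Vset n ∧ v ∈ Vset n ∧ theta n u v ∈ Vset n ∧ theta n v u ∈ Vset n

def horizontalT (n : ℤ) : Set Tile := blueHExt n ∪ yellowH n ∪ greenH n ∪ antigreenH n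

section

variable {n : ℤ} {u v : Vec3} {τ : Tile}

theorem mem_Vset {a b c : ℤ} :
    (a, b, c) ∈ Vset n ↔ 0 ≤ a ∧ a ≤ b ∧ b ≤ c ∧ c ≤ n + 1 ∧ b ≤ 1 :=
  Iff.rfl

theorem mem_Cset_iff : τ ∈ Cset n ↔ ∃ u v, IsChip n u v ∧ τ = chip n u v := by
  simp only [Cset, IsChip, chip, Set.mem_ofPred_eq, and_assoc]

theorem IsChip.symm (h : IsChip n u v) : IsChip n v u :=
  ⟨h.2.1, h.1, h.2.2.2, h.2.2.1⟩

theorem reflect_chip : reflect (chip n u v) = chip n v u := rfl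

theorem reflect_mem_Cset (h : τ ∈ Cset n) : reflect τ ∈ Cset n := by
  obtain ⟨u, v, huv, rfl⟩ := mem_Cset_iff.1 h
  exact mem_Cset_iff.2 ⟨v, u, huv.symm, reflect_chip⟩

theorem fst_eq_zero_or_eq_one_of_mem_Vset (h : v ∈ Vset n) : v.1 = 0 ∨ v.1 = 1 := by
  obtain ⟨h₀, h₁, -, -, h₄⟩ := h
  omega

theorem theta_of_fst_eq_zero (hu : u.1 = 0) (hv : v.1 = 0) :
    theta n u v = (0, v.2.2 - n, v.2.1) := by
  simp [theta, hu, hv]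

theorem IsChip.chip_mem_whiteT (h : IsChip n u v) (hu : u.1 = 1) (hv : v.1 = 1) :
    chip n u v ∈ whiteT n := by
  obtain ⟨u₀, u₁, i⟩ := u
  obtain ⟨v₀, v₁, j⟩ := v
  obtain ⟨hu', hv', huv, hvu⟩ := h
  subst hu hv
  simp only [theta, mem_Vset, ↓reduceIte, one_ne_zero] at hu' hv' huv hvu
  obtain rfl : u₁ = 1 := by omega
  obtain rfl : v₁ = 1 := by omega
  exact ⟨i, j, by omega, by omega, by omega, by omega, by simp [chip, theta]⟩

theorem IsChip.chip_mem_horizontalT (h : IsChip n u v) (hu : u.1 = 0) (hv : v.1 = 1) :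
    chip n u v ∈ horizontalT n := by
  obtain ⟨u₀, d, i⟩ := u
  obtain ⟨v₀, v₁, c⟩ := v
  obtain ⟨hu', hv', huv, hvu⟩ := h
  subst hu hv
  simp only [theta, mem_Vset, ↓reduceIte, one_ne_zero] at hu' hv' huv hvu
  obtain rfl : v₁ = 1 := by omega
  have hd : d = 0 ∨ d = 1 := by omega
  have hc : c = n ∨ c = n + 1 := by omega
  rcases hd with rfl | rfl <;> rcases hc with rfl | rfl
  · exact .inl <| .inl <| .inl ⟨i, by omega, by omega, by simp [chip, theta]⟩
  · exact .inl <| .inr ⟨i, by omega, by omega, by simp [chip, theta]⟩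
  · exact .inr ⟨i, by omega, by omega, by simp [chip, theta]⟩
  · exact .inl <| .inl <| .inr ⟨i, by omega, by omega, by simp [chip, theta]⟩

theorem IsChip.chip_mem_junctionExt (h : IsChip n u v) (hu : u.1 = 0) (hv : v.1 = 0) :
    chip n u v ∈ junctionExt n := by
  obtain ⟨u₀, u₁, u₂⟩ := u
  obtain ⟨v₀, v₁, v₂⟩ := v
  subst hu hv
  obtain ⟨hu', hv', huv, hvu⟩ := h
  rw [theta_of_fst_eq_zero rfl rfl] at huv hvu
  simp only [mem_Vset] at hu' hv' huv hvu
  refine ⟨_, _, ?_, ?_, by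
    rw [chip, theta_of_fst_eq_zero rfl rfl, theta_of_fst_eq_zero rfl rfl]⟩ <;>
    simp only [junctionVecs, Set.mem_insert_iff, Set.mem_singleton_iff, Prod.mk.injEq,
      true_and] <;>
    omega

theorem Cset_subset :
    Cset n ⊆ whiteT n ∪ horizontalT n ∪ reflect '' horizontalT n ∪ junctionExt n := by
  intro τ hτ
  obtain ⟨u, v, huv, rfl⟩ := mem_Cset_iff.1 hτ
  rcases fst_eq_zero_or_eq_one_of_mem_Vset huv.1 with hu | hu <;>
    rcases fst_eq_zero_or_eq_one_of_mem_Vset huv.2.1 with hv | hv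
  · exact .inr (huv.chip_mem_junctionExt hu hv)
  · exact .inl <| .inl <| .inr (huv.chip_mem_horizontalT hu hv)
  · exact .inl <| .inr ⟨_, huv.symm.chip_mem_horizontalT hv hu, reflect_chip⟩
  · exact .inl <| .inl <| .inl (huv.chip_mem_whiteT hu hv)

theorem whiteT_subset_Cset : whiteT n ⊆ Cset n := by
  rintro _ ⟨i, j, hi₁, hi₂, hj₁, hj₂, rfl⟩
  refine mem_Cset_iff.2 ⟨(1, 1, i), (1, 1, j), ?_, by simp [chip, theta]⟩
  simp only [IsChip, theta, mem_Vset, ↓reduceIte, one_ne_zero]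
  omega

theorem chip_horizontal_mem_Cset (hn : 1 ≤ n) {d e i : ℤ} (hd : d = 0 ∨ d = 1)
    (he : e = 0 ∨ e = 1) (hi : d ≤ i ∧ i ≤ n) : chip n (0, d, i) (1, 1, n + e) ∈ Cset n := by
  refine mem_Cset_iff.2 ⟨_, _, ?_, rfl⟩
  simp only [IsChip, theta, mem_Vset, ↓reduceIte, one_ne_zero]
  omega

theorem horizontalT_subset_Cset (hn : 1 ≤ n) : horizontalT n ⊆ Cset n := by
  rintro _ (((⟨i, hi₁, hi₂, rfl⟩ | ⟨i, hi₁, hi₂, rfl⟩) | ⟨i, hi₁, hi₂, rfl⟩) |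
    ⟨i, hi₁, hi₂, rfl⟩)
  · simpa [chip, theta] using
      chip_horizontal_mem_Cset hn (d := 0) (e := 0) (.inl rfl) (.inl rfl) ⟨hi₁, hi₂⟩
  · simpa [chip, theta] using
      chip_horizontal_mem_Cset hn (d := 1) (e := 1) (.inr rfl) (.inr rfl) ⟨hi₁, hi₂⟩
  · simpa [chip, theta] using
      chip_horizontal_mem_Cset hn (d := 0) (e := 1) (.inl rfl) (.inr rfl) ⟨hi₁, hi₂⟩
  · simpa [chip, theta] using
      chip_horizontal_mem_Cset hn (d := 1) (e := 0) (.inr rfl) (.inl rfl) ⟨hi₁, hi₂⟩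

theorem junctionExt_subset_Cset (hn : 1 ≤ n) : junctionExt n ⊆ Cset n := by
  rintro _ ⟨u, v, hu, hv, rfl⟩
  have hfst : u.1 = 0 ∧ v.1 = 0 := by
    rcases hu with rfl | rfl | rfl <;> rcases hv with rfl | rfl | rfl <;> simp
  refine mem_Cset_iff.2 ⟨u, v, ?_, ?_⟩
  · rw [IsChip, theta_of_fst_eq_zero hfst.1 hfst.2, theta_of_fst_eq_zero hfst.2 hfst.1]
    rcases hu with rfl | rfl | rfl <;> rcases hv with rfl | rfl | rfl <;>
      simp only [mem_Vset] <;> omega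
  · rw [chip, theta_of_fst_eq_zero hfst.1 hfst.2, theta_of_fst_eq_zero hfst.2 hfst.1]

theorem TprimeSet_eq :
    TprimeSet n = whiteT n ∪ horizontalT n ∪ reflect '' horizontalT n ∪ junctionExt n := by
  simp only [TprimeSet, horizontalT, Set.image_union, ← Set.union_assoc]

end

/-- For every integer n ≥ 1, the set 𝒞_n of all instances of the θ_n-chip
equals the extended set of metallic mean Wang tiles 𝒯'_n. -/
theorem statement1 (n : ℤ) (hn : 1 ≤ n) : Cset n = TprimeSet n := by
  rw [TprimeSet_eq]
  refine Cset_subset.antisymm <| Set.union_subset (Set.union_subset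
    (Set.union_subset whiteT_subset_Cset (horizontalT_subset_Cset hn)) ?_)
    (junctionExt_subset_Cset hn)
  exact Set.image_subset_iff.2 fun _ hτ => reflect_mem_Cset (horizontalT_subset_Cset hn hτ)

end MetallicMean
end

section
/- For every integer n ≥ 1, the tile set 𝒞_n admits the north-east characterization 𝒞_n = {(r, t, ψ_n(r,t), ψ_n(t,r)) : r,t ∈ V_n such that ψ_n(r,t) ∈ V_n and ψ_n(t,r) ∈ V_n}, where tiles are written as (right, top, left, bottom). -/
open scoped BigOperators

namespace MetallicMean

/-- The function ψ_n computing the (left, bottom) labels from the (right, top) labels. -/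
def psi (n : ℤ) (r t : Vec3) : Vec3 :=
  (r.1,
   if r.1 = 0 then t.2.2 - t.1 else 1,
   if t.1 = 0 then t.2.1 + n else r.2.2 - 1)

/-! The maps `(u, v) ↦ (θ(u,v), θ(v,u))` and `(r, t) ↦ (ψ(r,t), ψ(t,r))` are mutually inverse on
`V_n × V_n`, so the chips built from either side are the same tiles. Beyond unfolding the
definitions, the only property of `V_n` this uses is that a label with nonzero first entry has
middle entry `1`. -/

variable {n : ℤ}

lemma psi_theta {u v : Vec3} (hu : u ∈ Vset n) (hv : v ∈ Vset n) :
    psi n (theta n u v) (theta n v u) = u := by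
  obtain ⟨u₀, u₁, u₂⟩ := u
  obtain ⟨v₀, v₁, v₂⟩ := v
  simp only [Vset, Set.mem_ofPred_eq] at hu hv
  simp only [psi, theta, Prod.mk.injEq, true_and]
  split_ifs <;> constructor <;> omega

lemma theta_psi {r t : Vec3} (hr : r ∈ Vset n) (ht : t ∈ Vset n) :
    theta n (psi n r t) (psi n t r) = r := by
  obtain ⟨r₀, r₁, r₂⟩ := r
  obtain ⟨t₀, t₁, t₂⟩ := t
  simp only [Vset, Set.mem_ofPred_eq] at hr ht
  simp only [psi, theta, Prod.mk.injEq, true_and]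
  split_ifs <;> constructor <;> omega

theorem statement2_general (n : ℤ) :
    Cset n = {τ : Tile | ∃ r t : Vec3, r ∈ Vset n ∧ t ∈ Vset n ∧
      psi n r t ∈ Vset n ∧ psi n t r ∈ Vset n ∧
      τ = (r, t, psi n r t, psi n t r)} := by
  ext τ
  constructor
  · rintro ⟨u, v, hu, hv, huv, hvu, rfl⟩
    refine ⟨theta n u v, theta n v u, huv, hvu, ?_, ?_, ?_⟩ <;>
      simp only [psi_theta hu hv, psi_theta hv hu, hu, hv]
  · rintro ⟨r, t, hr, ht, hrt, htr, rfl⟩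
    refine ⟨psi n r t, psi n t r, hrt, htr, ?_, ?_, ?_⟩ <;>
      simp only [theta_psi hr ht, theta_psi ht hr, hr, ht]

/-- For every integer n ≥ 1, the tile set 𝒞_n admits the north-east
characterization via ψ_n, writing tiles as (right, top, left, bottom). -/
theorem statement2 (n : ℤ) (hn : 1 ≤ n) :
    Cset n = {τ : Tile | ∃ r t : Vec3, r ∈ Vset n ∧ t ∈ Vset n ∧
      psi n r t ∈ Vset n ∧ psi n t r ∈ Vset n ∧
      τ = (r, t, psi n r t, psi n t r)} :=
  statement2_general n

end MetallicMean
end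

section
/- For every integer n ≥ 1, the set of Wang tiles 𝒞_n is both SW-deterministic and NE-deterministic: if two tiles of 𝒞_n have the same left label and the same bottom label then they are equal, and if two tiles of 𝒞_n have the same right label and the same top label then they are equal. -/
/-! A tile of `Cset n` is `(θ u v, θ v u, u, v)`, so it is determined by its left and bottom
labels `u, v`. Conversely the first coordinates of the right and top labels are `u₀` and `v₀`,
each `0` or `1`; in each of the four cases the remaining coordinates of `θ u v` and `θ v u`
return the unknown coordinates of `u` and `v` up to a shift, and a first coordinate `1` forces
the second one to be `1` as well. -/

open scoped BigOperators

namespace MetallicMean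

lemma theta_swap_injOn (n : ℤ) :
    Set.InjOn (fun p : Vec3 × Vec3 => (theta n p.1 p.2, theta n p.2 p.1)) (Vset n ×ˢ Vset n) := by
  rintro ⟨⟨u₀, u₁, u₂⟩, ⟨v₀, v₁, v₂⟩⟩ ⟨hu, hv⟩ ⟨⟨u₀', u₁', u₂'⟩, ⟨v₀', v₁', v₂'⟩⟩ ⟨hu', hv'⟩ h
  simp only [Vset, Set.mem_ofPred_eq] at hu hv hu' hv'
  simp only [theta, Prod.mk.injEq] at h ⊢
  split_ifs at h <;> omega

theorem statement3_general (n : ℤ) :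
    (∀ τ₁ ∈ Cset n, ∀ τ₂ ∈ Cset n,
      left τ₁ = left τ₂ → bottom τ₁ = bottom τ₂ → τ₁ = τ₂) ∧
    (∀ τ₁ ∈ Cset n, ∀ τ₂ ∈ Cset n,
      right τ₁ = right τ₂ → top τ₁ = top τ₂ → τ₁ = τ₂) := by
  constructor
  · rintro τ₁ ⟨u₁, v₁, -, -, -, -, rfl⟩ τ₂ ⟨u₂, v₂, -, -, -, -, rfl⟩ (rfl : u₁ = u₂)
      (rfl : v₁ = v₂)
    rfl
  · rintro τ₁ ⟨u₁, v₁, hu₁, hv₁, -, -, rfl⟩ τ₂ ⟨u₂, v₂, hu₂, hv₂, -, -, rfl⟩ hr ht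
    obtain ⟨rfl, rfl⟩ := Prod.ext_iff.mp <|
      theta_swap_injOn n (Set.mk_mem_prod hu₁ hv₁) (Set.mk_mem_prod hu₂ hv₂) (Prod.ext hr ht)
    rfl

/-- For every integer n ≥ 1, the set of Wang tiles 𝒞_n is both
SW-deterministic and NE-deterministic. -/
theorem statement3 (n : ℤ) (hn : 1 ≤ n) :
    (∀ τ₁ ∈ Cset n, ∀ τ₂ ∈ Cset n,
      left τ₁ = left τ₂ → bottom τ₁ = bottom τ₂ → τ₁ = τ₂) ∧
    (∀ τ₁ ∈ Cset n, ∀ τ₂ ∈ Cset n,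
      right τ₁ = right τ₂ → top τ₁ = top τ₂ → τ₁ = τ₂) :=
  statement3_general n

end MetallicMean
end

section
/- Let n ≥ 1 be an integer, d = (0,−1,1) and e = (1,0,0). Every Wang tile (r,t,ℓ,b) ∈ 𝒞_n satisfies the system of equations ⟨(1/n)d, t + ℓ⟩ − ⟨e, ℓ⟩ = ⟨(1/n)d, b + r⟩ − ⟨e, b⟩, ⟨e, ℓ⟩ = ⟨e, r⟩, and ⟨e, b⟩ = ⟨e, t⟩; equivalently, writing ℓ = (ℓ₀,ℓ₁,ℓ₂), b = (b₀,b₁,b₂), r = (r₀,r₁,r₂), t = (t₀,t₁,t₂): ℓ₀ = r₀, b₀ = t₀, and t₂ − t₁ + ℓ₂ − ℓ₁ − n·ℓ₀ = b₂ − b₁ + r₂ − r₁ − n·b₀. -/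
open scoped BigOperators

namespace MetallicMean

/-- Rational 3-dimensional vectors. -/
abbrev Vec3Q := ℚ × ℚ × ℚ

/-- Cast an integer vector to a rational vector. -/
def toQ (v : Vec3) : Vec3Q := ((v.1 : ℚ), (v.2.1 : ℚ), (v.2.2 : ℚ))

/-- The canonical inner product on ℚ³. -/
def dotQ (a b : Vec3Q) : ℚ := a.1 * b.1 + a.2.1 * b.2.1 + a.2.2 * b.2.2

/-- The vector d = (0, -1, 1). -/
def dQ : Vec3Q := (0, -1, 1)

/-- The vector e = (1, 0, 0). -/
def eQ : Vec3Q := (1, 0, 0)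

end MetallicMean

namespace MetallicMean

lemma fst_eq_zero_or_of_mem_Vset {n : ℤ} {v : Vec3} (hv : v ∈ Vset n) :
    v.1 = 0 ∨ v.1 = 1 ∧ v.2.1 = 1 := by
  obtain ⟨h0, h1, -, -, h4⟩ := hv
  omega

/-- `x.2.2 - x.2.1` is `⟨d, x⟩` with `d = (0,-1,1)`, so this is the balance equation over `ℤ`. -/
lemma theta_balance {n : ℤ} {u v : Vec3} (hu : u ∈ Vset n) (hv : v ∈ Vset n) :
    (theta n v u).2.2 - (theta n v u).2.1 + u.2.2 - u.2.1 - n * u.1 =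
      v.2.2 - v.2.1 + (theta n u v).2.2 - (theta n u v).2.1 - n * v.1 := by
  rcases fst_eq_zero_or_of_mem_Vset hu with hu0 | ⟨hu0, hu1⟩ <;>
    rcases fst_eq_zero_or_of_mem_Vset hv with hv0 | ⟨hv0, hv1⟩ <;>
    simp only [theta, hu0, hv0, if_true, one_ne_zero, if_false] <;> omega

lemma dotQ_eQ_toQ (v : Vec3) : dotQ eQ (toQ v) = v.1 := by
  simp [dotQ, eQ, toQ]

lemma dotQ_smul_dQ_toQ_add (c : ℚ) (a b : Vec3) :
    dotQ (c • dQ) (toQ a + toQ b) = c * ((a.2.2 - a.2.1 + b.2.2 - b.2.1 : ℤ) : ℚ) := by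
  simp only [dotQ, dQ, toQ, Prod.smul_mk, Prod.mk_add_mk, smul_eq_mul]
  push_cast
  ring

lemma dotQ_balance_of_int_balance {n : ℤ} (hn : n ≠ 0) {r t l b : Vec3}
    (h : t.2.2 - t.2.1 + l.2.2 - l.2.1 - n * l.1 = b.2.2 - b.2.1 + r.2.2 - r.2.1 - n * b.1) :
    dotQ ((1 / (n : ℚ)) • dQ) (toQ t + toQ l) - dotQ eQ (toQ l) =
      dotQ ((1 / (n : ℚ)) • dQ) (toQ b + toQ r) - dotQ eQ (toQ b) := by
  have hnQ : (n : ℚ) ≠ 0 := by exact_mod_cast hn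
  have hQ : ((t.2.2 - t.2.1 + l.2.2 - l.2.1 - n * l.1 : ℤ) : ℚ) =
      ((b.2.2 - b.2.1 + r.2.2 - r.2.1 - n * b.1 : ℤ) : ℚ) := congrArg _ h
  rw [dotQ_smul_dQ_toQ_add, dotQ_smul_dQ_toQ_add, dotQ_eQ_toQ, dotQ_eQ_toQ]
  field_simp
  push_cast at hQ ⊢
  linarith

/-- Every Wang tile (r,t,ℓ,b) ∈ 𝒞_n satisfies
⟨(1/n)d, t+ℓ⟩ - ⟨e,ℓ⟩ = ⟨(1/n)d, b+r⟩ - ⟨e,b⟩, ⟨e,ℓ⟩ = ⟨e,r⟩ and ⟨e,b⟩ = ⟨e,t⟩;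
equivalently ℓ₀ = r₀, b₀ = t₀ and
t₂ - t₁ + ℓ₂ - ℓ₁ - n·ℓ₀ = b₂ - b₁ + r₂ - r₁ - n·b₀. -/
theorem statement4 (n : ℤ) (hn : 1 ≤ n) (τ : Tile) (hτ : τ ∈ Cset n) :
    (dotQ ((1 / (n : ℚ)) • dQ) (toQ (top τ) + toQ (left τ)) - dotQ eQ (toQ (left τ)) =
      dotQ ((1 / (n : ℚ)) • dQ) (toQ (bottom τ) + toQ (right τ)) - dotQ eQ (toQ (bottom τ))) ∧
    dotQ eQ (toQ (left τ)) = dotQ eQ (toQ (right τ)) ∧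
    dotQ eQ (toQ (bottom τ)) = dotQ eQ (toQ (top τ)) ∧
    (left τ).1 = (right τ).1 ∧
    (bottom τ).1 = (top τ).1 ∧
    (top τ).2.2 - (top τ).2.1 + (left τ).2.2 - (left τ).2.1 - n * (left τ).1 =
      (bottom τ).2.2 - (bottom τ).2.1 + (right τ).2.2 - (right τ).2.1 - n * (bottom τ).1 := by
  obtain ⟨u, v, hu, hv, -, -, rfl⟩ := hτ
  have balance := theta_balance hu hv
  refine ⟨dotQ_balance_of_int_balance (by omega) balance, ?_, ?_, rfl, rfl, balance⟩ <;>
    simp only [dotQ_eQ_toQ] <;> rfl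

end MetallicMean
end

section
/- For every integer n ≥ 1 and all x, y ∈ [0,1), one has Λ_n(x,y) = θ_n(Λ_n({x + β*}, y), Λ_n({y + β*}, x)). -/
open scoped BigOperators

/-! Write `c = β⁻¹ = -β*`, so that `0 < c ≤ 1`, `β c = 1` and `β = n + c`. Each coordinate of the
identity is then settled by splitting on whether `x` and `y` lie below `c` (which decides the
first coordinates and the fractional parts `{x - c}`, `{y - c}`); the floors left over all have
the shape `⌊c t + (1 - c)⌋` with `t ∈ [0, 2)`, and such a floor equals `⌊t⌋`. -/

namespace MetallicMean

/-- For `t ∈ [0, 2)` the point `c * t + (1 - c)` lies between `t` and `1`, hence on the same side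
of `1` as `t`. -/
lemma floor_mul_add_one_sub_eq_floor {c t : ℝ} (hc0 : 0 < c) (hc1 : c ≤ 1) (ht0 : 0 ≤ t)
    (ht2 : t < 2) : ⌊c * t + (1 - c)⌋ = ⌊t⌋ := by
  rcases lt_or_ge t 1 with ht1 | ht1
  · rw [Int.floor_eq_zero_iff.2 ⟨ht0, ht1⟩, Int.floor_eq_zero_iff]
    constructor <;> nlinarith
  · have floor_eq_one {r : ℝ} (h1 : 1 ≤ r) (h2 : r < 2) : ⌊r⌋ = 1 :=
      Int.floor_eq_iff.2 ⟨by exact_mod_cast h1, by norm_num [h2]⟩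
    rw [floor_eq_one ht1 ht2, floor_eq_one (by nlinarith) (by nlinarith)]

section Beta

variable (n : ℤ)

lemma sqrt_sq_add_four_sq : Real.sqrt ((n : ℝ) ^ 2 + 4) ^ 2 = (n : ℝ) ^ 2 + 4 :=
  Real.sq_sqrt (by positivity)

lemma beta_pos : 0 < beta n := by
  have := sqrt_sq_add_four_sq n
  unfold beta
  nlinarith [Real.sqrt_nonneg ((n : ℝ) ^ 2 + 4)]

lemma beta_mul_beta_sub : beta n * (beta n - n) = 1 := by
  have := sqrt_sq_add_four_sq n
  unfold beta
  linear_combination this / 4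

lemma inv_beta_eq : (beta n)⁻¹ = beta n - n :=
  inv_eq_of_mul_eq_one_right (beta_mul_beta_sub n)

lemma betaStar_eq_neg_inv : betaStar n = -(beta n)⁻¹ := by
  rw [inv_beta_eq, betaStar]
  ring

variable {n}

lemma one_le_beta (hn : 0 ≤ n) : 1 ≤ beta n := by
  have hn' : (0 : ℝ) ≤ n := by exact_mod_cast hn
  have := sqrt_sq_add_four_sq n
  unfold beta
  nlinarith [Real.sqrt_nonneg ((n : ℝ) ^ 2 + 4)]

end Beta

section Coding

variable {c y : ℝ}

lemma floor_sub_add_one_eq_zero_iff (hc1 : c ≤ 1) (hy : y ∈ Set.Ico (0 : ℝ) 1) :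
    ⌊y - c + 1⌋ = 0 ↔ y < c := by
  obtain ⟨hy0, hy1⟩ := hy
  rw [Int.floor_eq_zero_iff]
  constructor
  · rintro ⟨-, h⟩
    linarith
  · intro h
    constructor <;> linarith

lemma fract_sub_of_lt (hc1 : c ≤ 1) (hy0 : 0 ≤ y) (h : y < c) : Int.fract (y - c) = y - c + 1 := by
  rw [← Int.fract_add_one, Int.fract_eq_self]
  constructor <;> linarith

lemma fract_sub_of_le (hc0 : 0 < c) (h : c ≤ y) (hy1 : y < 1) : Int.fract (y - c) = y - c := by
  rw [Int.fract_eq_self]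
  constructor <;> linarith

variable {b x : ℝ} {n : ℤ}

-- The second and third coordinates of `statement8`, with `b = β` and `c = β⁻¹ = -β*`.

lemma floor_coding_snd (hb : b = n + c) (hbc : b * c = 1) (hc0 : 0 < c) (hc1 : c ≤ 1)
    (hx : x ∈ Set.Ico (0 : ℝ) 1) (hy : y ∈ Set.Ico (0 : ℝ) 1) :
    ⌊c * x + y - c + 1⌋ =
      if ⌊y - c + 1⌋ = 0 then ⌊b * Int.fract (y - c) + x - c + 1⌋ - n else 1 := by
  obtain ⟨hx0, hx1⟩ := hx
  obtain ⟨hy0, hy1⟩ := hy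
  split_ifs with h
  · have hyc := (floor_sub_add_one_eq_zero_iff hc1 ⟨hy0, hy1⟩).1 h
    have hb0 : 0 < b := pos_of_mul_pos_left (hbc ▸ one_pos) hc0.le
    have hby : b * y < 1 := by nlinarith
    rw [show c * x + y - c + 1 = c * (b * y + x) + (1 - c) by linear_combination (-y) * hbc,
      floor_mul_add_one_sub_eq_floor hc0 hc1 (by positivity) (by linarith),
      fract_sub_of_lt hc1 hy0 hyc,
      show b * (y - c + 1) + x - c + 1 = b * y + x + n by linear_combination hb - hbc,
      Int.floor_add_intCast, add_sub_cancel_right]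
  · have hcy : c ≤ y := not_lt.1 ((floor_sub_add_one_eq_zero_iff hc1 ⟨hy0, hy1⟩).not.1 h)
    exact Int.floor_eq_iff.2 ⟨by push_cast; nlinarith, by push_cast; nlinarith⟩

lemma floor_coding_thd (hbc : b * c = 1) (hc0 : 0 < c) (hc1 : c ≤ 1)
    (hx : x ∈ Set.Ico (0 : ℝ) 1) :
    ⌊b * x + y - c + 1⌋ =
      if ⌊x - c + 1⌋ = 0 then ⌊c * Int.fract (y - c) + x - c + 1⌋ + ⌊y - c + 1⌋
      else ⌊b * Int.fract (x - c) + y - c + 1⌋ + 1 := by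
  obtain ⟨hx0, hx1⟩ := hx
  split_ifs with h
  · have hxc := (floor_sub_add_one_eq_zero_iff hc1 ⟨hx0, hx1⟩).1 h
    have hb0 : 0 < b := pos_of_mul_pos_left (hbc ▸ one_pos) hc0.le
    have hbx : b * x < 1 := by nlinarith
    have hz := Int.fract_nonneg (y - c)
    have hz1 := Int.fract_lt_one (y - c)
    rw [show c * Int.fract (y - c) + x - c + 1 = c * (b * x + Int.fract (y - c)) + (1 - c) by
        linear_combination (-x) * hbc,
      floor_mul_add_one_sub_eq_floor hc0 hc1 (by positivity) (by linarith),
      ← Int.floor_add_intCast]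
    congr 1
    have := Int.fract_add_floor (y - c)
    rw [Int.floor_add_one]
    push_cast
    linarith
  · have hcx : c ≤ x := not_lt.1 ((floor_sub_add_one_eq_zero_iff hc1 ⟨hx0, hx1⟩).not.1 h)
    rw [fract_sub_of_le hc0 hcx hx1, ← Int.floor_add_one]
    congr 1
    linear_combination hbc

end Coding

/-- For every integer n ≥ 1 and x, y ∈ [0,1),
Λ_n(x,y) = θ_n(Λ_n({x+β*}, y), Λ_n({y+β*}, x)). -/
theorem statement8 (n : ℤ) (hn : 1 ≤ n) (x y : ℝ)
    (hx : x ∈ Set.Ico (0 : ℝ) 1) (hy : y ∈ Set.Ico (0 : ℝ) 1) :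
    Lam n x y =
      theta n (Lam n (Int.fract (x + betaStar n)) y) (Lam n (Int.fract (y + betaStar n)) x) := by
  have hc0 : 0 < (beta n)⁻¹ := inv_pos.2 (beta_pos n)
  have hc1 : (beta n)⁻¹ ≤ 1 := inv_le_one_of_one_le₀ (one_le_beta (by omega))
  have hbc : beta n * (beta n)⁻¹ = 1 := mul_inv_cancel₀ (beta_pos n).ne'
  have hb : beta n = n + (beta n)⁻¹ := by rw [inv_beta_eq]; ring
  simp only [Lam, theta, betaStar_eq_neg_inv, ← sub_eq_add_neg]
  refine Prod.ext rfl (Prod.ext ?_ ?_)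
  · exact floor_coding_snd hb hbc hc0 hc1 hx hy
  · exact floor_coding_thd hbc hc0 hc1 hx

end MetallicMean
end
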